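/- The modified Bessel function of the second kind of order zero, K₀(x) = −(ln(x/2) + γ) I₀(x) + ∑_{n=0}^∞ φ(n) x²ⁿ / (2²ⁿ (n!)²), is well defined and twice differentiable on (0,∞) and satisfies the modified Bessel equation of order zero: x K₀''(x) + K₀'(x) − x K₀(x) = 0 for all x > 0. -/

import Mathlib

/-- The Bessel function of the first kind of order zero,
`J₀(x) = ∑ (−1)ⁿ x²ⁿ / (2²ⁿ (n!)²)`. -/
noncomputable def besselJ0 (x : ℝ) : ℝ :=
  ∑' n : ℕ, (-1 : ℝ) ^ n * x ^ (2 * n) / (2 ^ (2 * n) * ((n.factorial : ℝ)) ^ 2)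

/-- `φ(n) = ∑_{m=1}^n 1/m`, with `φ(0) = 0`. -/
noncomputable def harmonicPhi (n : ℕ) : ℝ :=
  ∑ m ∈ Finset.range n, (1 : ℝ) / (m + 1)

/-- Weber's Bessel function of order zero,
`Y₀(x) = (2/π)[(ln(x/2) + γ) J₀(x) − ∑ (−1)ⁿ φ(n) x²ⁿ / (2²ⁿ (n!)²)]`. -/
noncomputable def besselY0 (x : ℝ) : ℝ :=
  (2 / Real.pi) *
    ((Real.log (x / 2) + Real.eulerMascheroniConstant) * besselJ0 x -
      ∑' n : ℕ, (-1 : ℝ) ^ n * harmonicPhi n * x ^ (2 * n) /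
        (2 ^ (2 * n) * ((n.factorial : ℝ)) ^ 2))

/-- The modified Bessel function of the first kind of order zero,
`I₀(x) = ∑ x²ⁿ / (2²ⁿ (n!)²)`. -/
noncomputable def besselI0 (x : ℝ) : ℝ :=
  ∑' n : ℕ, x ^ (2 * n) / (2 ^ (2 * n) * ((n.factorial : ℝ)) ^ 2)

/-- The modified Bessel function of the second kind of order zero,
`K₀(x) = −(ln(x/2) + γ) I₀(x) + ∑ φ(n) x²ⁿ / (2²ⁿ (n!)²)`. -/
noncomputable def besselK0 (x : ℝ) : ℝ :=
  -(Real.log (x / 2) + Real.eulerMascheroniConstant) * besselI0 x +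
    ∑' n : ℕ, harmonicPhi n * x ^ (2 * n) / (2 ^ (2 * n) * ((n.factorial : ℝ)) ^ 2)


/-!
In the variable `t = x² / 4` one has `I₀(x) = g(t)` and `K₀(x) = -(½ log t + γ) g(t) + h(t)` with
the entire series `g(t) = ∑ tⁿ / (n!)²` and `h(t) = ∑ φ(n) tⁿ / (n!)²`, and the substitution turns
`x y'' + y' - x y` into `x (t k'' + k' - k)`. Differentiating termwise, `t g'' + g' - g = 0`
because `(n + 1)² / ((n + 1)!)² = 1 / (n!)²`, and `t h'' + h' - h = g'` because
`φ(n + 1) - φ(n) = 1 / (n + 1)`. For `k = -(½ log t + c) g + h` the logarithm then drops out: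
`t k'' + k' - k = -(½ log t + c) (t g'' + g' - g) + (t h'' + h' - h) - g' = 0`.
-/

open Filter Topology

noncomputable def powerSum (a : ℕ → ℝ) (t : ℝ) : ℝ := ∑' n, a n * t ^ n

def derivCoeff (a : ℕ → ℝ) (n : ℕ) : ℝ := (n + 1) * a (n + 1)

def IsEntireCoeff (a : ℕ → ℝ) : Prop := ∀ r : ℝ, 0 < r → Summable fun n => |a n| * r ^ n

namespace IsEntireCoeff

variable {a : ℕ → ℝ}

theorem summable (ha : IsEntireCoeff a) (t : ℝ) : Summable fun n => a n * t ^ n :=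
  (ha (|t| + 1) (by positivity)).of_norm_bounded fun n => by
    rw [norm_mul, norm_pow, Real.norm_eq_abs, Real.norm_eq_abs]
    gcongr
    linarith

theorem derivCoeff (ha : IsEntireCoeff a) : IsEntireCoeff (derivCoeff a) := by
  intro r hr
  refine (((ha (2 * r) (by positivity)).comp_injective Nat.succ_injective).mul_left r⁻¹
    ).of_nonneg_of_le (fun n => by positivity) fun n => ?_
  have hn : ((n : ℝ) + 1) ≤ 2 ^ (n + 1) := by exact_mod_cast (Nat.lt_two_pow_self).le
  calc |_root_.derivCoeff a n| * r ^ n = ((n : ℝ) + 1) * |a (n + 1)| * r ^ n := by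
        rw [_root_.derivCoeff, abs_mul, abs_of_nonneg (by positivity)]
    _ ≤ 2 ^ (n + 1) * |a (n + 1)| * r ^ n := by gcongr
    _ = r⁻¹ * (|a (n + 1)| * (2 * r) ^ (n + 1)) := by field_simp; ring

theorem of_abs_le_inv_factorial (h : ∀ n, |a n| ≤ (n.factorial : ℝ)⁻¹) : IsEntireCoeff a :=
  fun r _ => (Real.summable_pow_div_factorial r).of_nonneg_of_le (fun n => by positivity)
    fun n => by rw [div_eq_inv_mul]; gcongr; exact h n

end IsEntireCoeff

section PowerSum

variable {a : ℕ → ℝ}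

theorem hasDerivAt_powerSum (ha : IsEntireCoeff a) (t : ℝ) :
    HasDerivAt (powerSum a) (powerSum (derivCoeff a) t) t := by
  set R := |t| + 1
  have hR : 0 < R := by positivity
  -- splitting off the constant term indexes the termwise derivatives by `derivCoeff a`
  have hsplit : powerSum a = fun y => a 0 + ∑' n, a (n + 1) * y ^ (n + 1) := by
    funext y
    rw [powerSum, (ha.summable y).tsum_eq_zero_add, pow_zero, mul_one]
  have htR : t ∈ Metric.ball (0 : ℝ) R := by
    rw [Metric.mem_ball, dist_zero_right, Real.norm_eq_abs]; linarith
  rw [hsplit, powerSum]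
  refine (hasDerivAt_tsum_of_isPreconnected (g := fun n y => a (n + 1) * y ^ (n + 1))
    (g' := fun n y => derivCoeff a n * y ^ n)
    (ha.derivCoeff R hR) Metric.isOpen_ball (convex_ball (0 : ℝ) R).isPreconnected
    (fun n y _ => ?_) (fun n y hy => ?_) htR
    ((ha.summable t).comp_injective Nat.succ_injective) htR).const_add _
  · simpa [derivCoeff, mul_comm, mul_left_comm, mul_assoc] using
      (hasDerivAt_pow (n + 1) y).const_mul (a (n + 1))
  · rw [Metric.mem_ball, dist_zero_right] at hy
    rw [norm_mul, norm_pow, Real.norm_eq_abs]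
    gcongr

theorem deriv_powerSum (ha : IsEntireCoeff a) : deriv (powerSum a) = powerSum (derivCoeff a) :=
  funext fun t => (hasDerivAt_powerSum ha t).deriv

theorem IsEntireCoeff.differentiableAt_powerSum (ha : IsEntireCoeff a) (t : ℝ) :
    DifferentiableAt ℝ (powerSum a) t :=
  (hasDerivAt_powerSum ha t).differentiableAt

theorem IsEntireCoeff.differentiableAt_deriv_powerSum (ha : IsEntireCoeff a) (t : ℝ) :
    DifferentiableAt ℝ (deriv (powerSum a)) t :=
  deriv_powerSum ha ▸ ha.derivCoeff.differentiableAt_powerSum t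

theorem hasSum_mul_powerSum_derivCoeff (ha : IsEntireCoeff a) (t : ℝ) :
    HasSum (fun n => n * a n * t ^ n) (t * powerSum (derivCoeff a) t) := by
  rw [← hasSum_nat_add_iff' 1]
  simpa [powerSum, derivCoeff, ← tsum_mul_left, pow_succ, mul_comm, mul_left_comm, mul_assoc]
    using ((ha.derivCoeff.summable t).mul_left t).hasSum

theorem hasSum_mul_deriv_deriv_add_deriv_sub (ha : IsEntireCoeff a) (t : ℝ) :
    HasSum (fun n : ℕ => (((n : ℝ) + 1) ^ 2 * a (n + 1) - a n) * t ^ n)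
      (t * deriv (deriv (powerSum a)) t + deriv (powerSum a) t - powerSum a t) := by
  rw [deriv_powerSum ha, deriv_powerSum ha.derivCoeff]
  have hsum := ((hasSum_mul_powerSum_derivCoeff ha.derivCoeff t).add
    (ha.derivCoeff.summable t).hasSum).sub (ha.summable t).hasSum
  have hcoeff : (fun n : ℕ => n * derivCoeff a n * t ^ n + derivCoeff a n * t ^ n - a n * t ^ n) =
      fun n : ℕ => (((n : ℝ) + 1) ^ 2 * a (n + 1) - a n) * t ^ n := by
    funext n
    simp only [derivCoeff]
    ring
  exact hcoeff ▸ hsum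

end PowerSum

noncomputable def logSecondSolution (c : ℝ) (g h : ℝ → ℝ) (t : ℝ) : ℝ :=
  -(Real.log t / 2 + c) * g t + h t

theorem logSecondSolution_ode {g h : ℝ → ℝ} (c : ℝ)
    (hg : ∀ t, 0 < t → DifferentiableAt ℝ g t) (hg' : ∀ t, 0 < t → DifferentiableAt ℝ (deriv g) t)
    (hh : ∀ t, 0 < t → DifferentiableAt ℝ h t) (hh' : ∀ t, 0 < t → DifferentiableAt ℝ (deriv h) t)
    (hg_ode : ∀ t, 0 < t → t * deriv (deriv g) t + deriv g t - g t = 0)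
    (hh_ode : ∀ t, 0 < t → t * deriv (deriv h) t + deriv h t - h t = deriv g t)
    {t : ℝ} (ht : 0 < t) :
    DifferentiableAt ℝ (logSecondSolution c g h) t ∧
      DifferentiableAt ℝ (deriv (logSecondSolution c g h)) t ∧
      t * deriv (deriv (logSecondSolution c g h)) t + deriv (logSecondSolution c g h) t
        - logSecondSolution c g h t = 0 := by
  set ℓ : ℝ → ℝ := fun s => Real.log s / 2 + c
  have hℓ : ∀ s, 0 < s → HasDerivAt ℓ (s⁻¹ / 2) s := fun s hs =>
    ((Real.hasDerivAt_log hs.ne').div_const 2).add_const c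
  set k' : ℝ → ℝ := fun s => -(s⁻¹ / 2) * g s + -ℓ s * deriv g s + deriv h s
  have hk : ∀ s, 0 < s → HasDerivAt (logSecondSolution c g h) (k' s) s := fun s hs =>
    ((hℓ s hs).fun_neg.fun_mul (hg s hs).hasDerivAt).fun_add (hh s hs).hasDerivAt
  have hk_eq : deriv (logSecondSolution c g h) =ᶠ[𝓝 t] k' :=
    eventually_of_mem (Ioi_mem_nhds ht) fun s hs => (hk s hs).deriv
  have hinv : HasDerivAt (fun s : ℝ => -(s⁻¹ / 2)) ((t ^ 2)⁻¹ / 2) t := by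
    simpa [neg_div] using ((hasDerivAt_inv ht.ne').div_const 2).fun_neg
  have hk' := ((hinv.fun_mul (hg t ht).hasDerivAt).fun_add
    ((hℓ t ht).fun_neg.fun_mul (hg' t ht).hasDerivAt)).fun_add (hh' t ht).hasDerivAt
  refine ⟨(hk t ht).differentiableAt, hk'.differentiableAt.congr_of_eventuallyEq hk_eq, ?_⟩
  rw [hk_eq.deriv_eq, hk'.deriv, (hk t ht).deriv, logSecondSolution]
  have hone : t * t⁻¹ = 1 := mul_inv_cancel₀ ht.ne'
  have hinv_sq : t * (t ^ 2)⁻¹ = t⁻¹ := by field_simp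
  simp only [k', ℓ]
  linear_combination (g t / 2) * hinv_sq - deriv g t * hone - (Real.log t / 2 + c) * hg_ode t ht
    + hh_ode t ht

theorem modifiedBessel_ode_of_eq_comp_sq_div_four {k y : ℝ → ℝ} (hy : ∀ x, y x = k (x ^ 2 / 4))
    (hk : ∀ t, 0 < t → DifferentiableAt ℝ k t ∧ DifferentiableAt ℝ (deriv k) t ∧
      t * deriv (deriv k) t + deriv k t - k t = 0)
    {x : ℝ} (hx : x ≠ 0) :
    DifferentiableAt ℝ y x ∧ DifferentiableAt ℝ (deriv y) x ∧
      x * deriv (deriv y) x + deriv y x - x * y x = 0 := by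
  obtain rfl : y = fun x => k (x ^ 2 / 4) := funext hy
  have hsq : ∀ x : ℝ, HasDerivAt (fun x => x ^ 2 / 4) (x / 2) x := fun x =>
    ((hasDerivAt_pow 2 x).div_const 4).congr_deriv (by norm_num; ring)
  have ht : ∀ x : ℝ, x ≠ 0 → 0 < x ^ 2 / 4 := fun x hx => by positivity
  have hy' : ∀ x : ℝ, x ≠ 0 →
      HasDerivAt (fun x => k (x ^ 2 / 4)) (deriv k (x ^ 2 / 4) * (x / 2)) x := fun x hx =>
    (hk _ (ht x hx)).1.hasDerivAt.comp x (hsq x)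
  have hy'_eq : deriv (fun x => k (x ^ 2 / 4)) =ᶠ[𝓝 x] fun x => deriv k (x ^ 2 / 4) * (x / 2) :=
    eventually_of_mem (isOpen_ne.mem_nhds hx) fun x hx => (hy' x hx).deriv
  obtain ⟨-, hk'_diff, hode⟩ := hk _ (ht x hx)
  have hy'' : HasDerivAt (fun x => deriv k (x ^ 2 / 4) * (x / 2))
      (deriv (deriv k) (x ^ 2 / 4) * (x / 2) * (x / 2) + deriv k (x ^ 2 / 4) * (1 / 2)) x := by
    have hk'_comp := hk'_diff.hasDerivAt.comp x (hsq x)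
    exact hk'_comp.fun_mul ((hasDerivAt_id' x).div_const 2)
  refine ⟨(hy' x hx).differentiableAt, hy''.differentiableAt.congr_of_eventuallyEq hy'_eq, ?_⟩
  rw [hy'_eq.deriv_eq, hy''.deriv, (hy' x hx).deriv]
  linear_combination x * hode

noncomputable def besselI0Coeff (n : ℕ) : ℝ := ((n.factorial : ℝ) ^ 2)⁻¹

noncomputable def harmonicBesselCoeff (n : ℕ) : ℝ := harmonicPhi n * besselI0Coeff n

theorem harmonicPhi_succ (n : ℕ) : harmonicPhi (n + 1) = harmonicPhi n + 1 / ((n : ℝ) + 1) :=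
  Finset.sum_range_succ _ n

theorem harmonicPhi_nonneg (n : ℕ) : 0 ≤ harmonicPhi n :=
  Finset.sum_nonneg fun _ _ => by positivity

theorem harmonicPhi_le (n : ℕ) : harmonicPhi n ≤ n := by
  calc harmonicPhi n ≤ ∑ _m ∈ Finset.range n, (1 : ℝ) :=
        Finset.sum_le_sum fun m _ => by
          rw [div_le_one (by positivity)]
          linarith [m.cast_nonneg (α := ℝ)]
    _ = n := by simp

theorem sq_mul_besselI0Coeff_succ (n : ℕ) :
    ((n : ℝ) + 1) ^ 2 * besselI0Coeff (n + 1) = besselI0Coeff n := by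
  simp only [besselI0Coeff, Nat.factorial_succ, Nat.cast_mul]
  have := n.factorial_pos
  field_simp
  push_cast
  ring

theorem sq_mul_harmonicBesselCoeff_succ_sub (n : ℕ) :
    ((n : ℝ) + 1) ^ 2 * harmonicBesselCoeff (n + 1) - harmonicBesselCoeff n =
      derivCoeff besselI0Coeff n := by
  rw [harmonicBesselCoeff, harmonicBesselCoeff, harmonicPhi_succ, derivCoeff,
    ← sq_mul_besselI0Coeff_succ n]
  field_simp
  ring

theorem isEntireCoeff_besselI0Coeff : IsEntireCoeff besselI0Coeff :=
  .of_abs_le_inv_factorial fun n => by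
    have h : (1 : ℝ) ≤ n.factorial := by exact_mod_cast n.factorial_pos
    rw [besselI0Coeff, abs_of_pos (by positivity), sq]
    exact inv_anti₀ (by positivity) (le_mul_of_one_le_left (by positivity) h)

theorem isEntireCoeff_harmonicBesselCoeff : IsEntireCoeff harmonicBesselCoeff :=
  .of_abs_le_inv_factorial fun n => by
    have h : harmonicPhi n ≤ n.factorial :=
      (harmonicPhi_le n).trans (by exact_mod_cast n.self_le_factorial)
    have hf : (0 : ℝ) < n.factorial := by exact_mod_cast n.factorial_pos
    rw [harmonicBesselCoeff, besselI0Coeff, abs_of_nonneg (by positivity [harmonicPhi_nonneg n]),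
      sq, mul_inv, ← mul_assoc, ← div_eq_mul_inv]
    exact mul_le_of_le_one_left (by positivity) ((div_le_one hf).mpr h)

theorem pow_two_mul_div_eq_besselI0Coeff_mul (x : ℝ) (n : ℕ) :
    x ^ (2 * n) / (2 ^ (2 * n) * (n.factorial : ℝ) ^ 2) = besselI0Coeff n * (x ^ 2 / 4) ^ n := by
  rw [besselI0Coeff, div_pow, pow_mul, pow_mul]
  norm_num
  ring

theorem besselK0_eq_logSecondSolution (x : ℝ) :
    besselK0 x = logSecondSolution Real.eulerMascheroniConstant (powerSum besselI0Coeff)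
      (powerSum harmonicBesselCoeff) (x ^ 2 / 4) := by
  have hlog : Real.log (x ^ 2 / 4) / 2 = Real.log (x / 2) := by
    rw [show x ^ 2 / 4 = (x / 2) ^ 2 by ring, Real.log_pow]
    push_cast
    ring
  simp only [besselK0, besselI0, logSecondSolution, powerSum, hlog, harmonicBesselCoeff,
    mul_div_assoc, pow_two_mul_div_eq_besselI0Coeff_mul, mul_assoc]

theorem powerSum_besselI0Coeff_ode (t : ℝ) :
    t * deriv (deriv (powerSum besselI0Coeff)) t + deriv (powerSum besselI0Coeff) t
      - powerSum besselI0Coeff t = 0 :=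
  (hasSum_mul_deriv_deriv_add_deriv_sub isEntireCoeff_besselI0Coeff t).unique <| by
    simp [sq_mul_besselI0Coeff_succ]

theorem powerSum_harmonicBesselCoeff_ode (t : ℝ) :
    t * deriv (deriv (powerSum harmonicBesselCoeff)) t + deriv (powerSum harmonicBesselCoeff) t
      - powerSum harmonicBesselCoeff t = deriv (powerSum besselI0Coeff) t := by
  refine (hasSum_mul_deriv_deriv_add_deriv_sub isEntireCoeff_harmonicBesselCoeff t).unique ?_
  rw [deriv_powerSum isEntireCoeff_besselI0Coeff]
  simp only [sq_mul_harmonicBesselCoeff_succ_sub]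
  exact (isEntireCoeff_besselI0Coeff.derivCoeff.summable t).hasSum

theorem summable_harmonicPhi_mul_pow_div (x : ℝ) :
    Summable fun n : ℕ => harmonicPhi n * x ^ (2 * n) / (2 ^ (2 * n) * (n.factorial : ℝ) ^ 2) :=
  (isEntireCoeff_harmonicBesselCoeff.summable (x ^ 2 / 4)).congr fun n => by
    rw [mul_div_assoc, pow_two_mul_div_eq_besselI0Coeff_mul, harmonicBesselCoeff, mul_assoc]

theorem besselK0_ode {x : ℝ} (hx : x ≠ 0) :
    DifferentiableAt ℝ besselK0 x ∧ DifferentiableAt ℝ (deriv besselK0) x ∧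
      x * deriv (deriv besselK0) x + deriv besselK0 x - x * besselK0 x = 0 := by
  have hg := isEntireCoeff_besselI0Coeff
  have hh := isEntireCoeff_harmonicBesselCoeff
  refine modifiedBessel_ode_of_eq_comp_sq_div_four besselK0_eq_logSecondSolution (fun t ht => ?_) hx
  exact logSecondSolution_ode _ (fun t _ => hg.differentiableAt_powerSum t)
    (fun t _ => hg.differentiableAt_deriv_powerSum t) (fun t _ => hh.differentiableAt_powerSum t)
    (fun t _ => hh.differentiableAt_deriv_powerSum t) (fun t _ => powerSum_besselI0Coeff_ode t)
    (fun t _ => powerSum_harmonicBesselCoeff_ode t) ht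

/-- The modified Bessel function of the second kind of order zero `K₀` is well defined
(its defining series converges) and twice differentiable on `(0,∞)`, and satisfies the
modified Bessel equation of order zero: `x K₀''(x) + K₀'(x) − x K₀(x) = 0` for all
`x > 0`. -/
theorem besselK0_wellDefined_and_ode :
    (∀ x ∈ Set.Ioi (0 : ℝ), Summable fun n : ℕ =>
      harmonicPhi n * x ^ (2 * n) / (2 ^ (2 * n) * ((n.factorial : ℝ)) ^ 2)) ∧
    (∀ x ∈ Set.Ioi (0 : ℝ), DifferentiableAt ℝ besselK0 x) ∧
    (∀ x ∈ Set.Ioi (0 : ℝ), DifferentiableAt ℝ (deriv besselK0) x) ∧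
    (∀ x ∈ Set.Ioi (0 : ℝ),
      x * deriv (deriv besselK0) x + deriv besselK0 x - x * besselK0 x = 0) :=
  ⟨fun x _ => summable_harmonicPhi_mul_pow_div x, fun _ hx => (besselK0_ode hx.ne').1,
    fun _ hx => (besselK0_ode hx.ne').2.1, fun _ hx => (besselK0_ode hx.ne').2.2⟩
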